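/- Let Ω ⊆ ℝⁿ be open with the exterior corkscrew condition (P_{R,κ}) and let L have kernel K with K(y) ≥ λ|y|^{−(n+2s)}. Then there exist d₀ = d₀(s, R, Ω) > 0 and c₀ = c₀(n, s, λ, κ) > 0 such that Lχ_Ω(x) ≥ c₀ dist(x, Ωᶜ)^{−2s} for all x ∈ Ω with dist(x, Ωᶜ) < d₀. -/

import Mathlib

/-!
Let `d = dist(x, Ωᶜ)` and let `z ∈ ∂Ω` be a nearest boundary point, so `|x - z| = d`. The exterior
corkscrew condition at scale `d` gives a ball of radius `κ d` inside `Ωᶜ ∩ B_d(z)`; every `y` in it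
satisfies `|x - y| < 2d`, hence `K(x - y) ≥ λ (2d)^{-(n+2s)}`. Integrating over that ball alone gives
`Lχ_Ω(x) ≥ λ (2d)^{-(n+2s)} |B_1| (κ d)^n = c₀ d^{-2s}`.
-/

open MeasureTheory Metric ENNReal Module

variable {E : Type*} [NormedAddCommGroup E]

/-- The exterior corkscrew condition `(P_{R,κ})`. -/
def ExteriorCorkscrew (R κ : ℝ) (Ω : Set E) : Prop :=
  ∀ r ∈ Set.Ioo (0:ℝ) R, ∀ z ∈ frontier Ω, ∃ x' : E, ball x' (κ * r) ⊆ Ωᶜ ∩ ball z r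

theorem IsOpen.exists_mem_frontier_infDist_compl_eq_dist [NormedSpace ℝ E] [ProperSpace E]
    {Ω : Set E} (hΩ : IsOpen Ω) (hΩc : Ωᶜ.Nonempty) {x : E} (hx : x ∈ Ω) :
    ∃ z ∈ frontier Ω, infDist x Ωᶜ = dist x z := by
  obtain ⟨z, hzc, hxz⟩ := hΩ.isClosed_compl.exists_infDist_eq_dist hΩc x
  have hpos : 0 < infDist x Ωᶜ :=
    (hΩ.isClosed_compl.notMem_iff_infDist_pos hΩc).mp (not_not.mpr hx)
  have hz_closure : z ∈ closure Ω := by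
    refine closure_mono (ball_infDist_compl_subset (x := x)) ?_
    rw [closure_ball x hpos.ne', mem_closedBall, dist_comm, hxz]
  exact ⟨z, hΩ.frontier_eq ▸ ⟨hz_closure, hzc⟩, hxz⟩

theorem ofReal_mul_measure_ball_le_setLIntegral_compl [MeasurableSpace E]
    [OpensMeasurableSpace E] (μ : Measure E) {K : E → ℝ≥0∞} {lam p : ℝ} (hlam : 0 ≤ lam)
    (hp : 0 ≤ p) (hK : ∀ y : E, y ≠ 0 → ENNReal.ofReal (lam * ‖y‖ ^ (-p)) ≤ K y)
    {Ω : Set E} {x z x' : E} {d r : ℝ} (hx : x ∈ Ω) (hxz : dist x z = d)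
    (hball : ball x' r ⊆ Ωᶜ ∩ ball z d) :
    ENNReal.ofReal (lam * (2 * d) ^ (-p)) * μ (ball x' r) ≤ ∫⁻ y in Ωᶜ, K (x - y) ∂μ := by
  have hK_ball : ∀ y ∈ ball x' r, ENNReal.ofReal (lam * (2 * d) ^ (-p)) ≤ K (x - y) := by
    intro y hy
    obtain ⟨hyΩ, hyz⟩ := hball hy
    have hxy : x - y ≠ 0 := sub_ne_zero.mpr fun h => hyΩ (h ▸ hx)
    have hnorm : ‖x - y‖ ≤ 2 * d := by
      rw [← dist_eq_norm]
      linarith [dist_triangle x z y, dist_comm y z ▸ mem_ball.mp hyz]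
    refine le_trans (ENNReal.ofReal_le_ofReal ?_) (hK _ hxy)
    refine mul_le_mul_of_nonneg_left ?_ hlam
    exact Real.rpow_le_rpow_of_nonpos (norm_pos_iff.mpr hxy) hnorm (neg_nonpos.mpr hp)
  calc ENNReal.ofReal (lam * (2 * d) ^ (-p)) * μ (ball x' r)
      = ∫⁻ _ in ball x' r, ENNReal.ofReal (lam * (2 * d) ^ (-p)) ∂μ :=
        (setLIntegral_const _ _).symm
    _ ≤ ∫⁻ y in ball x' r, K (x - y) ∂μ := setLIntegral_mono' measurableSet_ball hK_ball
    _ ≤ ∫⁻ y in Ωᶜ, K (x - y) ∂μ := lintegral_mono_set (hball.trans Set.inter_subset_left)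

theorem Real.mul_rpow_neg_add_mul_mul_pow {a d : ℝ} (ha : 0 ≤ a) (hd : 0 < d) (b : ℝ) (n : ℕ)
    (q : ℝ) : (a * d) ^ (-(n + q)) * (b * d) ^ n = a ^ (-(n + q)) * b ^ n * d ^ (-q) := by
  have hd_pow : d ^ (-(n + q)) * d ^ n = d ^ (-q) := by
    rw [← Real.rpow_natCast d n, ← Real.rpow_add hd]
    ring_nf
  rw [Real.mul_rpow ha hd.le, mul_pow, ← hd_pow]
  ring

theorem ExteriorCorkscrew.ofReal_mul_infDist_rpow_le_setLIntegral_compl [NormedSpace ℝ E]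
    [FiniteDimensional ℝ E] [MeasurableSpace E] [BorelSpace E] (μ : Measure E)
    [μ.IsAddHaarMeasure] {n : ℕ} (hn : finrank ℝ E = n) {R κ : ℝ} {Ω : Set E}
    (hcork : ExteriorCorkscrew R κ Ω) (hΩ : IsOpen Ω) (hκ : 0 < κ) {K : E → ℝ≥0∞} {lam q : ℝ}
    (hlam : 0 ≤ lam) (hq : 0 < q)
    (hK : ∀ y : E, y ≠ 0 → ENNReal.ofReal (lam * ‖y‖ ^ (-(n + q))) ≤ K y)
    {x : E} (hx : x ∈ Ω) (hxR : infDist x Ωᶜ < R) :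
    ENNReal.ofReal (lam * 2 ^ (-(n + q)) * κ ^ n * μ.real (ball 0 1) * infDist x Ωᶜ ^ (-q))
      ≤ ∫⁻ y in Ωᶜ, K (x - y) ∂μ := by
  rcases Ωᶜ.eq_empty_or_nonempty with hΩc | hΩc
  · simp [hΩc, Real.zero_rpow (neg_ne_zero.mpr hq.ne')]
  have hd : 0 < infDist x Ωᶜ :=
    (hΩ.isClosed_compl.notMem_iff_infDist_pos hΩc).mp (not_not.mpr hx)
  obtain ⟨z, hz, hxz⟩ := hΩ.exists_mem_frontier_infDist_compl_eq_dist hΩc hx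
  obtain ⟨x', hball⟩ := hcork _ ⟨hd, hxR⟩ z hz
  refine le_trans (le_of_eq ?_) (ofReal_mul_measure_ball_le_setLIntegral_compl μ hlam
    (by positivity) hK hx hxz.symm hball)
  rw [Measure.addHaar_ball_of_pos μ _ (mul_pos hκ hd), hn, ← ofReal_measureReal,
    ← ENNReal.ofReal_mul (by positivity), ← ENNReal.ofReal_mul (by positivity)]
  congr 1
  linear_combination (-lam * μ.real (ball 0 1)) *
    Real.mul_rpow_neg_add_mul_mul_pow zero_le_two hd κ n q

theorem L_indicator_lower_bound_corkscrew_general (n : ℕ) (s lam : ℝ)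
    (hs : s ∈ Set.Ioo (0:ℝ) 1) (hlam : 0 < lam)
    (R κ : ℝ) (hR : 0 < R) (hκ : 0 < κ)
    (Ω : Set (EuclideanSpace ℝ (Fin n))) (hΩ : IsOpen Ω)
    (hcork : ∀ r ∈ Set.Ioo (0:ℝ) R, ∀ z ∈ frontier Ω,
      ∃ x' : EuclideanSpace ℝ (Fin n),
        Metric.ball x' (κ * r) ⊆ Ωᶜ ∩ Metric.ball z r)
    (K : EuclideanSpace ℝ (Fin n) → ℝ≥0∞)
    (hKlow : ∀ y : EuclideanSpace ℝ (Fin n), y ≠ 0 →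
      ENNReal.ofReal (lam * ‖y‖ ^ (-(n + 2*s))) ≤ K y) :
    ∃ d₀ > (0:ℝ), ∃ c₀ > (0:ℝ),
      ∀ x ∈ Ω, Metric.infDist x Ωᶜ < d₀ →
        ENNReal.ofReal (c₀ * Metric.infDist x Ωᶜ ^ (-(2*s)))
          ≤ ∫⁻ y in Ωᶜ, K (x - y) := by
  have hvol : 0 < volume.real (ball (0 : EuclideanSpace ℝ (Fin n)) 1) :=
    ENNReal.toReal_pos (measure_ball_pos _ _ one_pos).ne' measure_ball_lt_top.ne
  refine ⟨R, hR, lam * 2 ^ (-(n + 2 * s)) * κ ^ n * volume.real (ball (0 : EuclideanSpace ℝ (Fin n)) 1), by positivity,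
    fun x hx hxR => ?_⟩
  exact ExteriorCorkscrew.ofReal_mul_infDist_rpow_le_setLIntegral_compl volume
    finrank_euclideanSpace_fin hcork hΩ hκ hlam.le (by linarith [hs.1]) hKlow hx hxR

theorem L_indicator_lower_bound_corkscrew (n : ℕ) (hn : 2 ≤ n) (s lam : ℝ)
    (hs : s ∈ Set.Ioo (0:ℝ) 1) (hlam : 0 < lam)
    (R κ : ℝ) (hR : 0 < R) (hκ : 0 < κ) (hκR : κ < R)
    (Ω : Set (EuclideanSpace ℝ (Fin n))) (hΩ : IsOpen Ω)
    (hcork : ∀ r ∈ Set.Ioo (0:ℝ) R, ∀ z ∈ frontier Ω,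
      ∃ x' : EuclideanSpace ℝ (Fin n),
        Metric.ball x' (κ * r) ⊆ Ωᶜ ∩ Metric.ball z r)
    (K : EuclideanSpace ℝ (Fin n) → ℝ≥0∞)
    (hKlow : ∀ y : EuclideanSpace ℝ (Fin n), y ≠ 0 →
      ENNReal.ofReal (lam * ‖y‖ ^ (-(n + 2*s))) ≤ K y) :
    ∃ d₀ > (0:ℝ), ∃ c₀ > (0:ℝ),
      ∀ x ∈ Ω, Metric.infDist x Ωᶜ < d₀ →
        ENNReal.ofReal (c₀ * Metric.infDist x Ωᶜ ^ (-(2*s)))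
          ≤ ∫⁻ y in Ωᶜ, K (x - y) :=
  L_indicator_lower_bound_corkscrew_general n s lam hs hlam R κ hR hκ Ω hΩ hcork K hKlow
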